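/- arXiv:2304.06206 — 3 statements merged into one kernel-verified Lean document; each statement's English description precedes it below -/
import Mathlib

section
/- Let N ≥ 3, let Γ = {γ₁,…,γ_{2N−1}} ⊂ ℝ consist of 2N−1 distinct points and Γ' = {γ'₁,…,γ'_{2N−5}} ⊂ ℝ consist of 2N−5 distinct points. Suppose p, q are complex polynomials of degree at most N−1 satisfying |p(γ)| = |q(γ)| for all γ ∈ Γ and |p'(γ')| = |q'(γ')| for all γ' ∈ Γ'. Then there exists a unimodular ζ ∈ ℂ such that q = ζ·p or q = ζ·p̄, where p̄ is the polynomial with conjugated coefficients. -/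
/-!
Conjugation fixes real points, so `|p(γ)|² = (p p̄)(γ)` on `ℝ`, and the data on `Γ` force
`p p̄ = q q̄`. Splitting off `u = gcd(p, q)` this gives `p = u a` and `q = c u ā` with `|c| = 1`.
Then `p' p̄' - q' q̄' = -W(u, ū) W(a, ā)` for the Wronskian `W`, and `W(f, f̄)` has degree at most
`2 deg f - 2` since its top coefficients cancel; so the product has degree at most `2N - 6`,
vanishes on `Γ'`, and one factor is zero. Finally `W(f, f̄) = 0` means `f̄ = λ f` with `|λ| = 1`,
which gives `q = ζ p̄` when `f = u` and `q = ζ p` when `f = a`.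
-/

open Complex Polynomial ComplexConjugate

namespace Polynomial

section Wronskian

variable {R : Type*} [CommRing R]

theorem coeff_wronskian_two_mul_sub_one {a b : R[X]} {d : ℕ} (hd : 1 ≤ d)
    (ha : a.natDegree ≤ d) (hb : b.natDegree ≤ d) :
    (wronskian a b).coeff (2 * d - 1) = 0 := by
  have hleading : ∀ f : R[X], (derivative f).coeff (d - 1) = f.coeff d * d := by
    intro f
    rw [coeff_derivative, Nat.sub_add_cancel hd, Nat.cast_sub hd, Nat.cast_one, sub_add_cancel]
  rw [wronskian, coeff_sub, show 2 * d - 1 = d + (d - 1) by omega,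
    coeff_mul_add_eq_of_natDegree_le ha ((natDegree_derivative_le b).trans (by omega)),
    add_comm, coeff_mul_add_eq_of_natDegree_le ((natDegree_derivative_le a).trans (by omega)) hb,
    hleading, hleading]
  ring

theorem natDegree_wronskian_add_two_le {a b : R[X]} {d : ℕ} (hw : wronskian a b ≠ 0)
    (ha : a.natDegree ≤ d) (hb : b.natDegree ≤ d) :
    (wronskian a b).natDegree + 2 ≤ 2 * d := by
  have hlt := natDegree_wronskian_lt_add hw
  have hne : (wronskian a b).natDegree ≠ 2 * d - 1 := by
    intro heq
    apply leadingCoeff_ne_zero.mpr hw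
    rw [leadingCoeff, heq, coeff_wronskian_two_mul_sub_one (by omega) ha hb]
  omega

end Wronskian

theorem exists_eq_C_mul_of_wronskian_eq_zero {K : Type*} [Field K] [CharZero K] {f g : K[X]}
    (hf : f ≠ 0) (hw : wronskian f g = 0) : ∃ c : K, g = C c * f := by
  classical
  obtain ⟨f₁, g₁, hf₁, hg₁, hcop⟩ := extract_gcd f g
  rw [gcd_isUnit_iff] at hcop
  set r := gcd f g
  clear_value r
  subst hf₁ hg₁
  have hr : r ≠ 0 := left_ne_zero_of_mul hf
  have hw₁ : wronskian f₁ g₁ = 0 := by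
    have : r ^ 2 * wronskian f₁ g₁ = 0 := by
      rw [← hw, wronskian, wronskian, derivative_mul, derivative_mul]
      ring
    exact (mul_eq_zero.mp this).resolve_left (pow_ne_zero 2 hr)
  obtain ⟨hdf₁, hdg₁⟩ := hcop.wronskian_eq_zero_iff.mp hw₁
  obtain ⟨k, rfl⟩ : ∃ k, f₁ = C k := ⟨_, eq_C_of_natDegree_eq_zero (derivative_eq_zero.mp hdf₁)⟩
  obtain ⟨l, rfl⟩ : ∃ l, g₁ = C l := ⟨_, eq_C_of_natDegree_eq_zero (derivative_eq_zero.mp hdg₁)⟩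
  have hk : k ≠ 0 := fun h => hf (by rw [h, C_0, mul_zero])
  refine ⟨l / k, ?_⟩
  rw [mul_left_comm, ← C_mul, div_mul_cancel₀ _ hk]

section ComplexConj

variable {p q : ℂ[X]}

theorem map_conj_map_conj (p : ℂ[X]) : (p.map conj).map conj = p := by
  simp [map_map]

theorem eval_map_conj_ofReal (p : ℂ[X]) (x : ℝ) :
    (p.map conj).eval (x : ℂ) = conj (p.eval (x : ℂ)) := by
  conv_lhs => rw [eval_map, ← conj_ofReal x]
  exact eval₂_hom _ _

theorem eval_mul_map_conj_ofReal (p : ℂ[X]) (x : ℝ) :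
    (p * p.map conj).eval (x : ℂ) = (‖p.eval (x : ℂ)‖ : ℂ) ^ 2 := by
  rw [eval_mul, eval_map_conj_ofReal, mul_conj']

theorem natDegree_mul_map_conj_le (p : ℂ[X]) : (p * p.map conj).natDegree ≤ 2 * p.natDegree :=
  natDegree_mul_le.trans (by rw [natDegree_map]; omega)

theorem mul_map_conj_eq_of_norm_eval_eq {s : Finset ℝ}
    (hdeg : (p * p.map conj - q * q.map conj).natDegree < s.card)
    (h : ∀ γ ∈ s, ‖p.eval (γ : ℂ)‖ = ‖q.eval (γ : ℂ)‖) :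
    p * p.map conj = q * q.map conj := by
  rw [← sub_eq_zero]
  refine eq_zero_of_natDegree_lt_card_of_eval_eq_zero _ (f := fun γ : s => ((γ : ℝ) : ℂ))
    (ofReal_injective.comp Subtype.val_injective) (fun γ => ?_) (by simpa using hdeg)
  rw [eval_sub, eval_mul_map_conj_ofReal, eval_mul_map_conj_ofReal, h γ γ.2, sub_self]

theorem norm_eq_one_of_C_mul_conj_mul_eq_self {c : ℂ} {g : ℂ[X]} (hg : g ≠ 0)
    (h : C (c * conj c) * g = g) : ‖c‖ = 1 := by
  have hcc : c * conj c = 1 := C_injective (mul_right_cancel₀ hg (by rw [h, C_1, one_mul]))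
  rw [mul_conj'] at hcc
  exact (pow_eq_one_iff_of_nonneg (norm_nonneg c) two_ne_zero).mp (by exact_mod_cast hcc)

theorem exists_map_conj_eq_C_mul_of_wronskian_eq_zero (hw : wronskian p (p.map conj) = 0) :
    ∃ c : ℂ, ‖c‖ = 1 ∧ p.map conj = C c * p := by
  rcases eq_or_ne p 0 with rfl | hp
  · exact ⟨1, by simp, by simp⟩
  obtain ⟨c, hc⟩ := exists_eq_C_mul_of_wronskian_eq_zero hp hw
  refine ⟨c, norm_eq_one_of_C_mul_conj_mul_eq_self hp ?_, hc⟩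
  have hp' := congrArg (map conj) hc
  rw [map_conj_map_conj, Polynomial.map_mul, map_C, hc] at hp'
  conv_rhs => rw [hp']
  rw [C_mul]
  ring

theorem exists_eq_C_mul_map_conj_of_isCoprime (hp : p ≠ 0) (hpq : IsCoprime p q)
    (h : p * p.map conj = q * q.map conj) : ∃ c : ℂ, ‖c‖ = 1 ∧ q = C c * p.map conj := by
  have hq_dvd : q ∣ p.map conj := hpq.symm.dvd_of_dvd_mul_left ⟨_, h⟩
  have hp_dvd : p.map conj ∣ q := by
    have : p ∣ q.map conj := hpq.dvd_of_dvd_mul_left ⟨_, h.symm⟩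
    simpa only [map_conj_map_conj] using Polynomial.map_dvd conj this
  obtain ⟨u, hu⟩ := dvd_dvd_iff_associated.mp ⟨hp_dvd, hq_dvd⟩
  obtain ⟨c, -, hcu⟩ := Polynomial.isUnit_iff.mp u.isUnit
  have hq : q = C c * p.map conj := by rw [← hu, ← hcu, mul_comm]
  refine ⟨c, norm_eq_one_of_C_mul_conj_mul_eq_self
    (mul_ne_zero hp (map_ne_zero (f := conj) hp)) ?_, hq⟩
  conv_rhs => rw [h, hq]
  rw [Polynomial.map_mul, map_C, map_conj_map_conj, C_mul]
  ring

theorem exists_factorization_of_mul_map_conj_eq (h : p * p.map conj = q * q.map conj) :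
    ∃ u a : ℂ[X], ∃ c : ℂ, ‖c‖ = 1 ∧ p = u * a ∧ q = C c * (u * a.map conj) := by
  classical
  rcases eq_or_ne p 0 with rfl | hp
  · have hq : q = 0 := by simpa using h.symm
    exact ⟨0, 0, 1, by simp, by simp, by simp [hq]⟩
  obtain ⟨a, b, hpa, hqb, hab⟩ := extract_gcd p q
  rw [gcd_isUnit_iff] at hab
  set u := gcd p q
  clear_value u
  subst hpa hqb
  have hu : u ≠ 0 := left_ne_zero_of_mul hp
  have hab' : a * a.map conj = b * b.map conj := by
    refine mul_left_cancel₀ (mul_ne_zero hu (map_ne_zero (f := conj) hu)) ?_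
    simp only [Polynomial.map_mul] at h
    linear_combination h
  obtain ⟨c, hc, rfl⟩ := exists_eq_C_mul_map_conj_of_isCoprime (right_ne_zero_of_mul hp) hab hab'
  exact ⟨u, a, c, hc, rfl, by ring⟩

theorem derivative_mul_map_conj_sub (u a : ℂ[X]) {c : ℂ} (hc : ‖c‖ = 1) :
    derivative (u * a) * (derivative (u * a)).map conj -
        derivative (C c * (u * a.map conj)) * (derivative (C c * (u * a.map conj))).map conj =
      -(wronskian u (u.map conj) * wronskian a (a.map conj)) := by
  have hcc : C c * C (conj c) = 1 := by
    rw [← C_mul, mul_conj', hc]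
    simp
  simp only [derivative_mul, derivative_C, zero_mul, zero_add, Polynomial.map_mul,
    Polynomial.map_add, map_C, derivative_map, map_conj_map_conj, wronskian]
  linear_combination (-((derivative u * a.map conj + u * (derivative a).map conj) *
    ((derivative u).map conj * a + u.map conj * derivative a))) * hcc

theorem wronskian_map_conj_mul_eq_zero {u a : ℂ[X]} {c : ℂ} (hc : ‖c‖ = 1) {s : Finset ℝ}
    (hdeg : 2 * (u * a).natDegree < s.card + 4)
    (h : ∀ γ ∈ s, ‖(derivative (u * a)).eval (γ : ℂ)‖ =
      ‖(derivative (C c * (u * a.map conj))).eval (γ : ℂ)‖) :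
    wronskian u (u.map conj) * wronskian a (a.map conj) = 0 := by
  by_contra hW
  have hWu := left_ne_zero_of_mul hW
  have hWa := right_ne_zero_of_mul hW
  have hu := natDegree_wronskian_add_two_le hWu le_rfl (natDegree_map _).le
  have ha := natDegree_wronskian_add_two_le hWa le_rfl (natDegree_map _).le
  rw [natDegree_mul (fun h => hWu (by simp [h])) (fun h => hWa (by simp [h]))] at hdeg
  apply hW
  rw [← neg_eq_zero, ← derivative_mul_map_conj_sub u a hc, sub_eq_zero]
  refine mul_map_conj_eq_of_norm_eval_eq ?_ h
  rw [derivative_mul_map_conj_sub u a hc, natDegree_neg]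
  have := natDegree_mul_le (p := wronskian u (u.map conj)) (q := wronskian a (a.map conj))
  omega

end ComplexConj

end Polynomial

theorem stmt_8 (N : ℕ) (hN : 3 ≤ N) (Γ Γ' : Finset ℝ)
    (hΓ : Γ.card = 2 * N - 1) (hΓ' : Γ'.card = 2 * N - 5)
    (p q : Polynomial ℂ) (hp : p.natDegree ≤ N - 1) (hq : q.natDegree ≤ N - 1)
    (h1 : ∀ γ ∈ Γ, ‖p.eval (γ : ℂ)‖ = ‖q.eval (γ : ℂ)‖)
    (h2 : ∀ γ ∈ Γ', ‖(Polynomial.derivative p).eval (γ : ℂ)‖ =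
        ‖(Polynomial.derivative q).eval (γ : ℂ)‖) :
    ∃ ζ : ℂ, ‖ζ‖ = 1 ∧
      (q = Polynomial.C ζ * p ∨ q = Polynomial.C ζ * p.map (starRingEnd ℂ)) := by
  have hpq : p * p.map conj = q * q.map conj := by
    refine mul_map_conj_eq_of_norm_eval_eq (s := Γ) ?_ h1
    have := natDegree_sub_le (p * p.map conj) (q * q.map conj)
    have := natDegree_mul_map_conj_le p
    have := natDegree_mul_map_conj_le q
    omega
  obtain ⟨u, a, c, hc, rfl, rfl⟩ := exists_factorization_of_mul_map_conj_eq hpq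
  have hW := wronskian_map_conj_mul_eq_zero hc (by omega) h2
  rcases mul_eq_zero.mp hW with hWu | hWa
  · obtain ⟨l, hl, hlu⟩ := exists_map_conj_eq_C_mul_of_wronskian_eq_zero hWu
    refine ⟨c * conj l, by rw [norm_mul, norm_conj, hc, hl, one_mul], Or.inr ?_⟩
    have hll : C (conj l) * C l = 1 := by
      rw [← C_mul, mul_comm, mul_conj', hl]
      simp
    rw [Polynomial.map_mul, hlu, C_mul]
    linear_combination (-(C c * u * a.map conj)) * hll
  · obtain ⟨m, hm, hma⟩ := exists_map_conj_eq_C_mul_of_wronskian_eq_zero hWa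
    exact ⟨c * m, by rw [norm_mul, hc, hm, one_mul], Or.inl (by rw [hma, C_mul]; ring)⟩
end

section
/- Let x, y ∈ ℂᴺ with all entries of x real, and suppose the autocorrelations satisfy A_m(x) = A_m(y) and A_m(x') = A_m(y') for all 0 ≤ m ≤ 2N−2, where x' denotes the derivative coefficient vector (0, x₁, 2x₂, …, (N−1)x_{N−1}). If additionally the first nonzero entries satisfy x_{k₀} = y_{k₀} > 0 at the common minimal nonzero index k₀, then x = y or x = conj(y). -/
open Complex Finset

/-- Zero-padded extension of a vector in `ℂᴺ` to a sequence on `ℕ`. -/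
noncomputable def padded (N : ℕ) (x : Fin N → ℂ) (j : ℕ) : ℂ :=
  if h : j < N then x ⟨j, h⟩ else 0

/-- Autocorrelation coefficients `A_m(x) = Σ_{j+k=m} x_j conj(x_k)`. -/
noncomputable def autoCorr (N : ℕ) (x : Fin N → ℂ) (m : ℕ) : ℂ :=
  ∑ j ∈ Finset.range (m + 1), padded N x j * (starRingEnd ℂ) (padded N x (m - j))

/-- Derivative coefficient vector `x' = (0, x₁, 2x₂, …, (N−1)x_{N−1})`. -/
noncomputable def derivVec (N : ℕ) (x : Fin N → ℂ) : Fin N → ℂ :=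
  fun k => (k : ℕ) * x k

noncomputable def polyOf (N : ℕ) (a : Fin N → ℂ) : Polynomial ℂ :=
  ∑ j : Fin N, Polynomial.monomial (j : ℕ) (a j)

lemma coeff_polyOf (N : ℕ) (a : Fin N → ℂ) (n : ℕ) :
    (polyOf N a).coeff n = padded N a n := by
  unfold polyOf padded
  rw [Polynomial.finset_sum_coeff]
  rcases lt_or_ge n N with h | h
  · rw [Finset.sum_eq_single (⟨n, h⟩ : Fin N)]
    · simp [h]
    · intro b _ hb
      rw [Polynomial.coeff_monomial, if_neg]
      simpa [Fin.ext_iff] using hb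
    · simp
  · rw [dif_neg (not_lt.mpr h)]
    apply Finset.sum_eq_zero
    intro b _
    rw [Polynomial.coeff_monomial, if_neg]
    omega

lemma padded_conj (N : ℕ) (a : Fin N → ℂ) (j : ℕ) :
    padded N (fun k => (starRingEnd ℂ) (a k)) j = (starRingEnd ℂ) (padded N a j) := by
  unfold padded; split <;> simp

lemma autoCorr_eq (N : ℕ) (a : Fin N → ℂ) (m : ℕ) :
    autoCorr N a m
      = ((polyOf N a) * polyOf N (fun k => (starRingEnd ℂ) (a k))).coeff m := by
  rw [Polynomial.coeff_mul, Finset.Nat.sum_antidiagonal_eq_sum_range_succ_mk]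
  unfold autoCorr
  refine Finset.sum_congr rfl fun j hj => ?_
  rw [coeff_polyOf, coeff_polyOf, padded_conj]

lemma autoCorr_zero (N : ℕ) (a : Fin N → ℂ) (m : ℕ) (h : 2 * N ≤ m + 1) :
    autoCorr N a m = 0 := by
  unfold autoCorr
  apply Finset.sum_eq_zero
  intro j hj
  simp only [Finset.mem_range] at hj
  unfold padded
  split
  · rw [dif_neg (by omega)]; simp
  · simp

lemma polyOf_derivVec (N : ℕ) (a : Fin N → ℂ) :
    polyOf N (derivVec N a) = Polynomial.X * Polynomial.derivative (polyOf N a) := by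
  ext n
  rw [coeff_polyOf]
  cases n with
  | zero =>
    rw [Polynomial.mul_coeff_zero]
    simp [padded, derivVec]
  | succ n =>
    rw [Polynomial.coeff_X_mul, Polynomial.coeff_derivative, coeff_polyOf]
    unfold padded derivVec
    split
    · push_cast; ring
    · simp

theorem stmt_9 (N : ℕ) (x y : Fin N → ℂ)
    (hxreal : ∀ k, (x k).im = 0)
    (hA : ∀ m ≤ 2 * N - 2, autoCorr N x m = autoCorr N y m)
    (hA' : ∀ m ≤ 2 * N - 2, autoCorr N (derivVec N x) m = autoCorr N (derivVec N y) m)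
    (k₀ : Fin N)
    (hkx : ∀ j : Fin N, j < k₀ → x j = 0) (hky : ∀ j : Fin N, j < k₀ → y j = 0)
    (hfirst : x k₀ = y k₀ ∧ 0 < (x k₀).re) :
    x = y ∨ x = fun k => (starRingEnd ℂ) (y k) := by
  have hk0N : (k₀ : ℕ) < N := k₀.isLt
  have hxconj : (fun k => (starRingEnd ℂ) (x k)) = x :=
    funext fun k => Complex.conj_eq_iff_im.mpr (hxreal k)
  have hxk0 : x k₀ ≠ 0 := by
    intro h
    have h2 := hfirst.2
    rw [h] at h2; simp at h2
  set P := polyOf N x with hP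
  set Q := polyOf N y with hQ
  set Qb := polyOf N (fun k => (starRingEnd ℂ) (y k)) with hQb
  have key : ∀ a b : Fin N → ℂ, (∀ m ≤ 2 * N - 2, autoCorr N a m = autoCorr N b m) →
      polyOf N a * polyOf N (fun k => (starRingEnd ℂ) (a k))
        = polyOf N b * polyOf N (fun k => (starRingEnd ℂ) (b k)) := by
    intro a b hab
    ext n
    rw [← autoCorr_eq, ← autoCorr_eq]
    by_cases hn : n ≤ 2 * N - 2
    · exact hab n hn
    · rw [autoCorr_zero _ _ _ (by omega), autoCorr_zero _ _ _ (by omega)]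
  have eq1 : P * P = Q * Qb := by
    have h := key x y hA
    rwa [hxconj] at h
  have hcd : ∀ a : Fin N → ℂ,
      (fun k => (starRingEnd ℂ) (derivVec N a k)) = derivVec N (fun k => (starRingEnd ℂ) (a k)) := by
    intro a; funext k; simp [derivVec]
  have eq2 : Polynomial.derivative P * Polynomial.derivative P
      = Polynomial.derivative Q * Polynomial.derivative Qb := by
    have e2 := key _ _ hA'
    rw [hcd, hcd, hxconj] at e2
    simp only [polyOf_derivVec] at e2
    have h2 : (Polynomial.X : Polynomial ℂ) ^ 2 * (Polynomial.derivative P * Polynomial.derivative P)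
        = Polynomial.X ^ 2 * (Polynomial.derivative Q * Polynomial.derivative Qb) := by
      linear_combination e2
    exact mul_left_cancel₀ (pow_ne_zero 2 Polynomial.X_ne_zero) h2
  have eq1' := congrArg Polynomial.derivative eq1
  rw [Polynomial.derivative_mul, Polynomial.derivative_mul] at eq1'
  have hW2 : (Polynomial.derivative Q * Qb - Q * Polynomial.derivative Qb) ^ 2 = 0 := by
    linear_combination
      (-(Polynomial.derivative P * P + P * Polynomial.derivative P
          + Polynomial.derivative Q * Qb + Q * Polynomial.derivative Qb)) * eq1'
        + 4 * (Polynomial.derivative P * Polynomial.derivative P) * eq1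
        + 4 * (Q * Qb) * eq2
  have hW : Polynomial.derivative Q * Qb - Q * Polynomial.derivative Qb = 0 :=
    pow_eq_zero_iff two_ne_zero |>.mp hW2
  have hQR : Q * Polynomial.derivative (Q - Qb) = Polynomial.derivative Q * (Q - Qb) := by
    rw [Polynomial.derivative_sub]
    linear_combination hW
  -- basic coefficient facts
  have hQk0 : Q.coeff (k₀ : ℕ) = x k₀ := by
    rw [hQ, coeff_polyOf]
    unfold padded
    rw [dif_pos hk0N, hfirst.1]
  have hQk0ne : Q.coeff (k₀ : ℕ) ≠ 0 := hQk0 ▸ hxk0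
  have hQne : Q ≠ 0 := fun h => hQk0ne (by rw [h, Polynomial.coeff_zero])
  have hQcoeff : ∀ i : ℕ, i < (k₀ : ℕ) → Q.coeff i = 0 := by
    intro i hi
    rw [hQ, coeff_polyOf]
    unfold padded
    split
    · exact hky _ (by simpa [Fin.lt_def] using hi)
    · rfl
  have ntdQ : Q.natTrailingDegree = (k₀ : ℕ) :=
    le_antisymm (Polynomial.natTrailingDegree_le_of_ne_zero hQk0ne)
      (Polynomial.le_natTrailingDegree hQne hQcoeff)
  have hRcoeff : ∀ i : ℕ, i ≤ (k₀ : ℕ) → (Q - Qb).coeff i = 0 := by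
    intro i hi
    rw [Polynomial.coeff_sub, hQ, hQb, coeff_polyOf, coeff_polyOf]
    unfold padded
    split
    next hiN =>
      rcases eq_or_lt_of_le hi with heq | hlt
      · have hfin : (⟨i, hiN⟩ : Fin N) = k₀ := Fin.ext heq
        have hyk : (starRingEnd ℂ) (y k₀) = y k₀ := by
          rw [← hfirst.1]
          exact Complex.conj_eq_iff_im.mpr (hxreal k₀)
        rw [hfin]
        simp [hyk]
      · have h0 : y ⟨i, hiN⟩ = 0 := hky _ (by simpa [Fin.lt_def] using hlt)
        simp [h0]
    next => simp
  -- the Wronskian trailing-degree argument: R = Q - Qb = 0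
  have hR : Q - Qb = 0 := by
    by_contra hR
    set t := (Q - Qb).natTrailingDegree with ht
    have htk : (k₀ : ℕ) + 1 ≤ t :=
      Polynomial.le_natTrailingDegree hR (fun m hm => hRcoeff m (by omega))
    have hRt : (Q - Qb).coeff t ≠ 0 := by
      have := Polynomial.trailingCoeff_nonzero_iff_nonzero.mpr hR
      rwa [Polynomial.trailingCoeff] at this
    by_cases hdR : Polynomial.derivative (Q - Qb) = 0
    · rw [hdR, mul_zero] at hQR
      have hnd : (Q - Qb).natDegree = 0 := Polynomial.natDegree_eq_zero_of_derivative_eq_zero hdR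
      have : t = 0 :=
        le_antisymm (hnd ▸ Polynomial.natTrailingDegree_le_natDegree _) (Nat.zero_le _)
      omega
    · obtain ⟨u, htu⟩ : ∃ u, t = u + 1 := ⟨t - 1, by omega⟩
      have h1ne : (Polynomial.derivative (Q - Qb)).coeff u ≠ 0 := by
        rw [Polynomial.coeff_derivative, ← htu]
        exact mul_ne_zero hRt (by exact_mod_cast Nat.succ_ne_zero u)
      have h2 : ∀ m < u, (Polynomial.derivative (Q - Qb)).coeff m = 0 := by
        intro m hm
        rw [Polynomial.coeff_derivative,
          Polynomial.coeff_eq_zero_of_lt_natTrailingDegree (by omega), zero_mul]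
      have ntddR : (Polynomial.derivative (Q - Qb)).natTrailingDegree = u :=
        le_antisymm (Polynomial.natTrailingDegree_le_of_ne_zero h1ne)
          (Polynomial.le_natTrailingDegree hdR h2)
      by_cases hdQ : Polynomial.derivative Q = 0
      · rw [hdQ, zero_mul] at hQR
        exact mul_ne_zero hQne hdR hQR
      · have hdeg := congrArg Polynomial.natTrailingDegree hQR
        rw [Polynomial.natTrailingDegree_mul hQne hdR,
          Polynomial.natTrailingDegree_mul hdQ hR, ntdQ, ntddR] at hdeg
        set s := (Polynomial.derivative Q).natTrailingDegree with hs
        have hk0s : (k₀ : ℕ) = s + 1 := by omega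
        have htc := congrArg Polynomial.trailingCoeff hQR
        rw [Polynomial.trailingCoeff_mul, Polynomial.trailingCoeff_mul,
          Polynomial.trailingCoeff, Polynomial.trailingCoeff, Polynomial.trailingCoeff,
          Polynomial.trailingCoeff, ntdQ, ntddR, ← hs, ← ht,
          Polynomial.coeff_derivative, Polynomial.coeff_derivative, ← htu, ← hk0s] at htc
        have hcancel : ((u : ℂ) + 1) = (s : ℂ) + 1 :=
          mul_left_cancel₀ (mul_ne_zero hQk0ne hRt) (by linear_combination htc)
        have hus : u = s := by exact_mod_cast add_right_cancel hcancel
        omega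
  have hQQb : Qb = Q := (sub_eq_zero.mp hR).symm
  rw [hQQb] at eq1
  have hPQ : (P - Q) * (P + Q) = 0 := by linear_combination eq1
  rcases mul_eq_zero.mp hPQ with h | h
  · left
    have hPQ' : P = Q := sub_eq_zero.mp h
    funext k
    have hc := congrArg (fun p => Polynomial.coeff p (k : ℕ)) hPQ'
    simp only [hP, hQ, coeff_polyOf] at hc
    unfold padded at hc
    rw [dif_pos k.isLt, dif_pos k.isLt] at hc
    simpa using hc
  · exfalso
    have hP' : P = -Q := eq_neg_of_add_eq_zero_left h
    have hPk0 : P.coeff (k₀ : ℕ) = x k₀ := by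
      rw [hP, coeff_polyOf]
      unfold padded
      rw [dif_pos hk0N]
    have hc := congrArg (fun p => Polynomial.coeff p (k₀ : ℕ)) hP'
    simp only [Polynomial.coeff_neg, hPk0, hQk0] at hc
    apply hxk0
    have : (2 : ℂ) * x k₀ = 0 := by linear_combination hc
    simpa using this
end

section
/- The five 3×3 symmetric matrices M₀ = [[0,0,0],[0,1,1],[0,1,1]], M₁ = [[0,0,0],[0,1,0],[0,0,−1]], M₂ = [[0,1,1],[1,0,−5],[1,−5,6]], M₃ = [[0,1,−1],[1,−4,3],[−1,3,−2]], M₄ = [[1,−2,1],[−2,4,−2],[1,−2,1]] are linearly independent in the 6-dimensional space of real symmetric 3×3 matrices, and hence the span of the outer products B(x)B(x)ᵀ over x ∈ (0,1), where B(x) = (x²/2, −x²+x+1/2, x²/2−x+1/2)ᵀ, is a proper 5-dimensional subspace of the symmetric 3×3 matrices. -/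
/-
Expanding, `B(x) B(x)ᵀ = ∑ₖ cₖ xᵏ Mₖ` with `c = (1/4, 1, 1/4, 1/2, 1/4)`. A polynomial curve
with nonzero coefficients spans exactly the span of its coefficient vectors: a linear functional
vanishing on the curve over an infinite set of parameters vanishes on a polynomial with infinitely
many roots, hence on each coefficient. The span is proper because `B(x)` lies on the conic
`b₀² + b₁² + b₂² - 2b₀b₁ - 2b₁b₂ - 14b₀b₂ = 0`, so `A ↦ tr (Q A)` with `Q` the matrix of that
quadratic form kills every `B(x) B(x)ᵀ` but not the symmetric matrix `diag (1, 0, 0)`.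
-/

open Matrix Set

/-- The B-spline vector `B(x) = (B₃(x), B₃(x+1), B₃(x+2))ᵀ` on `(0,1)`. -/
noncomputable def Bvec (x : ℝ) : Fin 3 → ℝ :=
  ![x ^ 2 / 2, -x ^ 2 + x + 1 / 2, x ^ 2 / 2 - x + 1 / 2]

noncomputable def Mmats : Fin 5 → Matrix (Fin 3) (Fin 3) ℝ :=
  ![!![0, 0, 0; 0, 1, 1; 0, 1, 1],
    !![0, 0, 0; 0, 1, 0; 0, 0, -1],
    !![0, 1, 1; 1, 0, -5; 1, -5, 6],
    !![0, 1, -1; 1, -4, 3; -1, 3, -2],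
    !![1, -2, 1; -2, 4, -2; 1, -2, 1]]

open Polynomial in
theorem eq_zero_of_forall_sum_mul_pow_eq_zero {K : Type*} [Field K] {n : ℕ} (a : Fin n → K)
    {S : Set K} (hS : S.Infinite) (h : ∀ x ∈ S, ∑ k, a k * x ^ (k : ℕ) = 0) : a = 0 := by
  set P : K[X] := ∑ k, C (a k) * X ^ (k : ℕ)
  have hP : P = 0 := by
    refine eq_zero_of_infinite_isRoot P (hS.mono fun x hx => ?_)
    simpa [P, eval_finsetSum] using h x hx
  funext k
  simpa [P, finsetSum_coeff, coeff_C_mul_X_pow, Fin.val_inj] using congr_arg (coeff · k) hP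

theorem Submodule.span_image_polynomial_curve {K V : Type*} [Field K] [AddCommGroup V]
    [Module K V] {n : ℕ} {c : Fin n → K} (hc : ∀ k, c k ≠ 0) (v : Fin n → V) {S : Set K}
    (hS : S.Infinite) :
    span K ((fun x => ∑ k, (c k * x ^ (k : ℕ)) • v k) '' S) = span K (range v) := by
  refine le_antisymm (span_le.2 ?_) (span_le.2 ?_)
  · rintro _ ⟨x, -, rfl⟩
    exact sum_mem fun k _ => smul_mem _ _ (subset_span ⟨k, rfl⟩)
  · rintro _ ⟨k, rfl⟩
    by_contra hk
    obtain ⟨f, hfk, hf⟩ := exists_dual_map_eq_bot_of_notMem hk inferInstance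
    have hcurve : ∀ x ∈ S, ∑ j, c j * f (v j) * x ^ (j : ℕ) = 0 := fun x hx => by
      have := LinearMap.le_ker_iff_map.2 hf (subset_span ⟨x, hx, rfl⟩)
      simpa [mul_comm, mul_left_comm, mul_assoc] using this
    have := congr_fun (eq_zero_of_forall_sum_mul_pow_eq_zero _ hS hcurve) k
    exact hfk ((mul_eq_zero.1 this).resolve_left (hc k))

noncomputable def splineCoeff : Fin 5 → ℝ := ![1 / 4, 1, 1 / 4, 1 / 2, 1 / 4]

theorem vecMulVec_Bvec (x : ℝ) :
    vecMulVec (Bvec x) (Bvec x) = ∑ k, (splineCoeff k * x ^ (k : ℕ)) • Mmats k := by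
  ext i j
  fin_cases i <;> fin_cases j <;>
    simp [Fin.sum_univ_five, splineCoeff, Mmats, Bvec, vecMulVec] <;> ring

theorem span_vecMulVec_Bvec :
    Submodule.span ℝ {A | ∃ x ∈ Ioo (0 : ℝ) 1, A = vecMulVec (Bvec x) (Bvec x)} =
      Submodule.span ℝ (range Mmats) := by
  have hset : {A | ∃ x ∈ Ioo (0 : ℝ) 1, A = vecMulVec (Bvec x) (Bvec x)} =
      (fun x => ∑ k, (splineCoeff k * x ^ (k : ℕ)) • Mmats k) '' Ioo 0 1 := by
    ext A
    simp [vecMulVec_Bvec, eq_comm]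
  rw [hset]
  exact Submodule.span_image_polynomial_curve (by simp [Fin.forall_fin_succ, splineCoeff]) _
    (Ioo_infinite zero_lt_one)

theorem linearIndependent_Mmats : LinearIndependent ℝ Mmats := by
  refine Fintype.linearIndependent_iff.2 fun g hg => ?_
  have entry (i j : Fin 3) := congr_fun (congr_fun hg i) j
  have h4 := entry 0 0
  have h01 := entry 0 1
  have h02 := entry 0 2
  have h11 := entry 1 1
  have h22 := entry 2 2
  simp [Fin.sum_univ_five, Mmats] at h4 h01 h02 h11 h22
  have h3 : g 3 = 0 := by linarith
  have h2 : g 2 = 0 := by linarith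
  have h0 : g 0 = 0 := by linarith
  have h1 : g 1 = 0 := by linarith
  intro k
  fin_cases k <;> assumption

theorem isSymm_Mmats (k : Fin 5) : (Mmats k).IsSymm := by
  fin_cases k <;> simp [Matrix.IsSymm.ext_iff, Fin.forall_fin_succ, Mmats]

def conicMatrix : Matrix (Fin 3) (Fin 3) ℝ := !![1, -1, -7; -1, 1, -1; -7, -1, 1]

noncomputable def conicForm : Matrix (Fin 3) (Fin 3) ℝ →ₗ[ℝ] ℝ :=
  traceLinearMap (Fin 3) ℝ ℝ ∘ₗ LinearMap.mulLeft ℝ conicMatrix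

theorem conicForm_vecMulVec_Bvec (x : ℝ) : conicForm (vecMulVec (Bvec x) (Bvec x)) = 0 := by
  simp only [conicForm, LinearMap.comp_apply, LinearMap.mulLeft_apply, traceLinearMap_apply,
    mul_vecMulVec, trace_vecMulVec]
  simp [conicMatrix, Bvec, mulVec, dotProduct, Fin.sum_univ_three]
  ring

theorem span_vecMulVec_Bvec_le_ker_conicForm :
    Submodule.span ℝ {A | ∃ x ∈ Ioo (0 : ℝ) 1, A = vecMulVec (Bvec x) (Bvec x)} ≤
      LinearMap.ker conicForm :=
  Submodule.span_le.2 fun _ ⟨x, _, hA⟩ => hA ▸ conicForm_vecMulVec_Bvec x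

theorem conicForm_diagonal : conicForm (diagonal ![1, 0, 0]) = 1 := by
  simp [conicForm, conicMatrix, trace, Fin.sum_univ_three, vecMul, dotProduct]

theorem stmt_10 :
    LinearIndependent ℝ Mmats ∧
    (∀ i, (Mmats i).IsSymm) ∧
    (Submodule.span ℝ {A : Matrix (Fin 3) (Fin 3) ℝ |
        ∃ x ∈ Set.Ioo (0 : ℝ) 1, A = Matrix.vecMulVec (Bvec x) (Bvec x)} =
      Submodule.span ℝ (Set.range Mmats)) ∧
    Module.finrank ℝ (Submodule.span ℝ {A : Matrix (Fin 3) (Fin 3) ℝ |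
        ∃ x ∈ Set.Ioo (0 : ℝ) 1, A = Matrix.vecMulVec (Bvec x) (Bvec x)}) = 5 ∧
    ∃ S : Matrix (Fin 3) (Fin 3) ℝ, S.IsSymm ∧
      S ∉ Submodule.span ℝ {A : Matrix (Fin 3) (Fin 3) ℝ |
        ∃ x ∈ Set.Ioo (0 : ℝ) 1, A = Matrix.vecMulVec (Bvec x) (Bvec x)} := by
  refine ⟨linearIndependent_Mmats, isSymm_Mmats, span_vecMulVec_Bvec, ?_,
    diagonal ![1, 0, 0], isSymm_diagonal _, fun h => ?_⟩
  · rw [span_vecMulVec_Bvec, finrank_span_eq_card linearIndependent_Mmats, Fintype.card_fin]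
  · have := span_vecMulVec_Bvec_le_ker_conicForm h
    rw [LinearMap.mem_ker, conicForm_diagonal] at this
    exact one_ne_zero this
end
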